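/- Define the operator θ on diagonal elementary Hochschild p-chains over the algebra of Hilbert-Schmidt operators by θ = Id − (bS + Sb), where S inserts the fixed idempotent factor (e_{α₀}^{i₀} × ē_{α₀}^I) ⊗ (e_{α₀}^I × ⋯) at the front. Then on an elementary diagonal chain K = (e_{α₀}^{i₀}×ē_{α₁}^{i₁}) ⊗ ⋯ ⊗ (e_{α_p}^{i_p}×ē_{α₀}^{i₀}), one has θK = (-1)^p [(e_{α_p}^{i_p}×ē_{α₀}^I)⊗(e_{α₀}^I×ē_{α₁}^{i₁}) − (e_{α_p}^{i_p}×ē_{α_p}^I)⊗(e_{α_p}^I×ē_{α₁}^{i₁})] ⊗ (e_{α₁}^{i₁}×ē_{α₂}^{i₂}) ⊗ ⋯ ⊗ (e_{α_{p-1}}^{i_{p-1}}×ē_{α_p}^{i_p}). -/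

import Mathlib

noncomputable section

open Finsupp

/-- An elementary Hilbert-Schmidt kernel symbol `e_α^i × ē_β^j` is encoded as the
pair `((α,i),(β,j))`; `A` indexes the simplices and `N` the basis elements. -/
abbrev Elem (A N : Type*) := (A × N) × (A × N)

variable {A N : Type*} [DecidableEq A] [DecidableEq N]

/-- Composition of elementary kernels:
`(e_α^i × ē_β^j)∘(e_γ^k × ē_η^l) = δ^{jk} δ_{βγ} (e_α^i × ē_η^l)`
(`none` encodes the result `0`). -/
def mergeOpt (a b : Elem A N) : Option (Elem A N) :=
  if a.2 = b.1 then some (a.1, b.2) else none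

/-- The `k`-th Hochschild face of an elementary `p`-chain (a tuple of `p+1`
elementary kernels), as an element of the free `ℂ`-vector space on tuples:
for `k < p` it composes factors `k` and `k+1`; for `k = p` it cyclically
composes the last and first factors. -/
def hsFaceTup (p : ℕ) (k : Fin (p + 1)) (e : Fin (p + 1) → Elem A N) :
    (Fin p → Elem A N) →₀ ℂ :=
  if h : (k : ℕ) < p then
    match mergeOpt (e k) (e ⟨(k : ℕ) + 1, by omega⟩) with
    | none => 0
    | Option.some m =>
        Finsupp.single
          (fun j : Fin p =>
            if (j : ℕ) < (k : ℕ) then e j.castSucc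
            else if (j : ℕ) = (k : ℕ) then m
            else e j.succ) 1
  else
    match mergeOpt (e (Fin.last p)) (e ⟨0, Nat.succ_pos p⟩) with
    | none => 0
    | Option.some m =>
        Finsupp.single
          (fun j : Fin p =>
            if (j : ℕ) = 0 then m else e j.castSucc) 1

/-- The Hochschild boundary `b = Σ_k (−1)^k ∂_k` on the free `ℂ`-vector space
spanned by elementary Hochschild chains of Hilbert-Schmidt kernels. -/
def hsB (p : ℕ) (c : (Fin (p + 1) → Elem A N) →₀ ℂ) : (Fin p → Elem A N) →₀ ℂ :=
  c.sum fun e coef => ∑ k : Fin (p + 1), ((-1 : ℂ) ^ (k : ℕ) * coef) • hsFaceTup p k e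

/-- The operator `S`, inserting the fixed factor
`(e_{α₀}^{i₀} × ē_{α₀}^I) ⊗ (e_{α₀}^I × ⋯)` at the front: it replaces the first
factor `e_{α₀}^{i₀} × ē_{α₁}^{i₁}` by
`(e_{α₀}^{i₀} × ē_{α₀}^I) ⊗ (e_{α₀}^I × ē_{α₁}^{i₁})`.  Here `I : A → N` fixes a
basis element `e_α^{I_α}` for each simplex `α`. -/
def hsS (I : A → N) (p : ℕ) (c : (Fin (p + 1) → Elem A N) →₀ ℂ) :
    (Fin (p + 2) → Elem A N) →₀ ℂ :=
  c.sum fun e coef =>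
    Finsupp.single
      (fun j : Fin (p + 2) =>
        if (j : ℕ) = 0 then ((e 0).1, ((e 0).1.1, I (e 0).1.1))
        else if (j : ℕ) = 1 then (((e 0).1.1, I (e 0).1.1), (e 0).2)
        else e ⟨(j : ℕ) - 1, by have := j.isLt; omega⟩) coef

/-! `S` followed by the `0`-th face is the identity, and `S` shifts every inner face by one:
`∂_{k+1} ∘ S = S ∘ ∂_k`. Hence in `bS + Sb` the inner faces cancel in pairs (their signs differ
by the shift), and what survives is `K` itself together with the two cyclic faces `∂_{p+2}(SK)`
and `S(∂_{p+1}K)`. On a diagonal chain the factors compose cyclically, and these two faces are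
exactly the two chains of the right-hand side. -/

theorem hsFaceTup_eq_ite {p : ℕ} (k : ℕ) (hk : k < p) (e : Fin (p + 1) → Elem A N) :
    hsFaceTup p ⟨k, by omega⟩ e =
      if (e ⟨k, by omega⟩).2 = (e ⟨k + 1, by omega⟩).1 then
        single (fun j : Fin p => if (j : ℕ) < k then e j.castSucc
          else if (j : ℕ) = k then ((e ⟨k, by omega⟩).1, (e ⟨k + 1, by omega⟩).2)
          else e j.succ) 1
      else 0 := by
  rw [hsFaceTup, dif_pos hk]
  by_cases h : (e ⟨k, by omega⟩).2 = (e ⟨k + 1, by omega⟩).1 <;>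
    simp only [mergeOpt, h, if_true, if_false]

theorem hsFaceTup_last_eq_ite {p : ℕ} (e : Fin (p + 1) → Elem A N) :
    hsFaceTup p (Fin.last p) e =
      if (e (Fin.last p)).2 = (e 0).1 then
        single (fun j : Fin p => if (j : ℕ) = 0 then ((e (Fin.last p)).1, (e 0).2)
          else e j.castSucc) 1
      else 0 := by
  rw [hsFaceTup, dif_neg (by simp)]
  by_cases h : (e (Fin.last p)).2 = (e 0).1 <;> simp [mergeOpt, h]

theorem hsB_single {p : ℕ} (e : Fin (p + 1) → Elem A N) :
    hsB p (single e 1) = ∑ k : Fin (p + 1), (-1 : ℂ) ^ (k : ℕ) • hsFaceTup p k e := by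
  simp [hsB, sum_single_index]

def hsSTup (I : A → N) (p : ℕ) (e : Fin (p + 1) → Elem A N) : Fin (p + 2) → Elem A N :=
  fun j => if (j : ℕ) = 0 then ((e 0).1, ((e 0).1.1, I (e 0).1.1))
    else if (j : ℕ) = 1 then (((e 0).1.1, I (e 0).1.1), (e 0).2)
    else e ⟨(j : ℕ) - 1, by omega⟩

omit [DecidableEq A] [DecidableEq N] in
theorem hsS_eq_mapDomain (I : A → N) (p : ℕ) (c : (Fin (p + 1) → Elem A N) →₀ ℂ) :
    hsS I p c = mapDomain (hsSTup I p) c :=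
  rfl

omit [DecidableEq A] [DecidableEq N] in
theorem hsS_single (I : A → N) {p : ℕ} (e : Fin (p + 1) → Elem A N) (c : ℂ) :
    hsS I p (single e c) = single (hsSTup I p e) c :=
  mapDomain_single

omit [DecidableEq A] [DecidableEq N] in
theorem hsSTup_last (I : A → N) {q : ℕ} (e : Fin (q + 2) → Elem A N) :
    hsSTup I (q + 1) e (Fin.last (q + 2)) = e (Fin.last (q + 1)) :=
  rfl

theorem hsFaceTup_zero_hsSTup (I : A → N) {p : ℕ} (e : Fin (p + 1) → Elem A N) :
    hsFaceTup (p + 1) 0 (hsSTup I p e) = single e 1 := by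
  refine ((hsFaceTup_eq_ite 0 p.succ_pos _).trans (if_pos rfl)).trans ?_
  congr 1
  funext j
  rcases j with ⟨_ | v, hv⟩ <;> simp [hsSTup]

theorem hsFaceTup_succ_hsSTup (I : A → N) {q : ℕ} (e : Fin (q + 2) → Elem A N)
    (k : ℕ) (hk : k < q + 1) :
    hsFaceTup (q + 2) ⟨k + 1, by omega⟩ (hsSTup I (q + 1) e) =
      hsS I q (hsFaceTup (q + 1) ⟨k, by omega⟩ e) := by
  have hfst : (hsSTup I (q + 1) e ⟨k + 1, by omega⟩).2 = (e ⟨k, by omega⟩).2 := by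
    rcases k with _ | k <;> rfl
  have hsnd : hsSTup I (q + 1) e ⟨k + 1 + 1, by omega⟩ = e ⟨k + 1, by omega⟩ := rfl
  rw [hsFaceTup_eq_ite _ (by omega), hsFaceTup_eq_ite _ hk, hfst, hsnd]
  split_ifs
  · rw [hsS_single]
    congr 1
    rcases k with _ | k <;> funext j <;> rcases j with ⟨_ | _ | v, hv⟩ <;> simp [hsSTup]
  · simp [hsS_eq_mapDomain]

theorem hsB_hsS_add_hsS_hsB_single (I : A → N) (q : ℕ) (e : Fin (q + 2) → Elem A N) :
    hsB (q + 2) (hsS I (q + 1) (single e 1)) + hsS I q (hsB (q + 1) (single e 1)) =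
      single e 1 + (-1 : ℂ) ^ (q + 2) • hsFaceTup (q + 2) (Fin.last _) (hsSTup I (q + 1) e)
        + (-1 : ℂ) ^ (q + 1) • hsS I q (hsFaceTup (q + 1) (Fin.last _) e) := by
  have hinner : ∑ k : Fin (q + 1), (-1 : ℂ) ^ (k.castSucc.succ : ℕ) •
        hsFaceTup (q + 2) k.castSucc.succ (hsSTup I (q + 1) e) =
      -∑ k : Fin (q + 1), (-1 : ℂ) ^ (k.castSucc : ℕ) •
        hsS I q (hsFaceTup (q + 1) k.castSucc e) := by
    rw [← Finset.sum_neg_distrib]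
    refine Finset.sum_congr rfl fun k _ => ?_
    rw [Fin.val_succ, pow_succ, mul_neg_one, neg_smul]
    exact congrArg _ (congrArg _ (hsFaceTup_succ_hsSTup I e k k.isLt))
  rw [hsS_single, hsB_single, hsB_single, hsS_eq_mapDomain, mapDomain_finsetSum,
    Fin.sum_univ_succ, Fin.sum_univ_castSucc, Fin.sum_univ_castSucc (n := q + 1)]
  simp only [mapDomain_smul, ← hsS_eq_mapDomain, hinner, hsFaceTup_zero_hsSTup, Fin.succ_last]
  simp only [Fin.val_zero, pow_zero, one_smul, Fin.val_last, Nat.succ_eq_add_one]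
  abel

theorem Fin.mk_succ_sub_one {n v : ℕ} (h : v + 1 < n + 1) :
    (⟨v + 1, h⟩ : Fin (n + 1)) - 1 = ⟨v, by omega⟩ := by
  ext
  simp [Fin.coe_sub_one]

def diagChain {n : ℕ} (α : Fin (n + 1) → A) (i : Fin (n + 1) → N) : Fin (n + 1) → Elem A N :=
  fun k => ((α k, i k), (α (k + 1), i (k + 1)))

omit [DecidableEq A] [DecidableEq N] in
theorem diagChain_sub_one {n : ℕ} (α : Fin (n + 1) → A) (i : Fin (n + 1) → N)
    (j : Fin (n + 1)) :
    diagChain α i (j - 1) = ((α (j - 1), i (j - 1)), (α j, i j)) := by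
  simp [diagChain]

theorem hsFaceTup_last_hsSTup_diagChain (I : A → N) {p : ℕ} (α : Fin (p + 2) → A)
    (i : Fin (p + 2) → N) :
    hsFaceTup (p + 2) (Fin.last _) (hsSTup I (p + 1) (diagChain α i)) =
      single (fun j : Fin (p + 2) =>
          if (j : ℕ) = 0 then
            ((α (Fin.last (p + 1)), i (Fin.last (p + 1))), (α 0, I (α 0)))
          else if (j : ℕ) = 1 then ((α 0, I (α 0)), (α 1, i 1))
          else ((α (j - 1), i (j - 1)), (α j, i j))) 1 := by
  rw [hsFaceTup_last_eq_ite, hsSTup_last, if_pos (by simp [hsSTup, diagChain])]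
  congr 1
  funext j
  rcases j with ⟨_ | _ | v, hv⟩
  · simp [hsSTup, diagChain]
  · simp [hsSTup, diagChain]
  · simp [hsSTup, ← Fin.mk_succ_sub_one hv, diagChain_sub_one]

theorem hsS_hsFaceTup_last_diagChain (I : A → N) {p : ℕ} (α : Fin (p + 2) → A)
    (i : Fin (p + 2) → N) :
    hsS I p (hsFaceTup (p + 1) (Fin.last _) (diagChain α i)) =
      single (fun j : Fin (p + 2) =>
          if (j : ℕ) = 0 then
            ((α (Fin.last (p + 1)), i (Fin.last (p + 1))),
             (α (Fin.last (p + 1)), I (α (Fin.last (p + 1)))))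
          else if (j : ℕ) = 1 then
            ((α (Fin.last (p + 1)), I (α (Fin.last (p + 1)))), (α 1, i 1))
          else ((α (j - 1), i (j - 1)), (α j, i j))) 1 := by
  rw [hsFaceTup_last_eq_ite, if_pos (by simp [diagChain]), hsS_single]
  congr 1
  funext j
  rcases j with ⟨_ | _ | v, hv⟩
  · simp [hsSTup, diagChain]
  · simp [hsSTup, diagChain]
  · simp [hsSTup, ← Fin.mk_succ_sub_one hv, diagChain_sub_one]

/-- **The operator `θ = Id − (bS + Sb)` on diagonal elementary chains.**
On an elementary diagonal chain
`K = (e_{α₀}^{i₀}×ē_{α₁}^{i₁}) ⊗ ⋯ ⊗ (e_{α_p}^{i_p}×ē_{α₀}^{i₀})` one has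
`θK = (−1)^p [(e_{α_p}^{i_p}×ē_{α₀}^I)⊗(e_{α₀}^I×ē_{α₁}^{i₁})
            − (e_{α_p}^{i_p}×ē_{α_p}^I)⊗(e_{α_p}^I×ē_{α₁}^{i₁})]
        ⊗ (e_{α₁}^{i₁}×ē_{α₂}^{i₂}) ⊗ ⋯ ⊗ (e_{α_{p-1}}^{i_{p-1}}×ē_{α_p}^{i_p})`
(stated here in degree `p+1` so that the term `Sb` is defined). -/
theorem theta_on_diagonal_chain (I : A → N) (p : ℕ)
    (α : Fin (p + 2) → A) (i : Fin (p + 2) → N)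
    (K : (Fin (p + 2) → Elem A N) →₀ ℂ)
    (hK : K = Finsupp.single (fun k : Fin (p + 2) => ((α k, i k), (α (k + 1), i (k + 1)))) 1) :
    K - hsB (p + 2) (hsS I (p + 1) K) - hsS I p (hsB (p + 1) K) =
      ((-1 : ℂ) ^ (p + 1)) •
        (Finsupp.single
          (fun j : Fin (p + 2) =>
            if (j : ℕ) = 0 then
              ((α (Fin.last (p + 1)), i (Fin.last (p + 1))), (α 0, I (α 0)))
            else if (j : ℕ) = 1 then ((α 0, I (α 0)), (α 1, i 1))
            else ((α (j - 1), i (j - 1)), (α j, i j))) (1 : ℂ)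
        - Finsupp.single
          (fun j : Fin (p + 2) =>
            if (j : ℕ) = 0 then
              ((α (Fin.last (p + 1)), i (Fin.last (p + 1))),
               (α (Fin.last (p + 1)), I (α (Fin.last (p + 1)))))
            else if (j : ℕ) = 1 then
              ((α (Fin.last (p + 1)), I (α (Fin.last (p + 1)))), (α 1, i 1))
            else ((α (j - 1), i (j - 1)), (α j, i j))) (1 : ℂ)) := by
  have hK' : K = single (diagChain α i) 1 := hK
  rw [hK', sub_sub, hsB_hsS_add_hsS_hsB_single, hsFaceTup_last_hsSTup_diagChain,
    hsS_hsFaceTup_last_diagChain, pow_succ (-1 : ℂ) (p + 1)]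
  module

end
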